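/- arXiv:2511.00882 — 2 statements merged into one kernel-verified Lean document; each statement's English description precedes it below -/
import Mathlib

section
/- Assume r ≥ 3. For all integers j and k with 3 ≤ k ≤ r and 1 ≤ j ≤ k-2, the following identity holds in W: (r_0 r_1 ⋯ r_{r-1} r_r r_{r-1} ⋯ r_k) · r_j = r_{j+1} · (r_0 r_1 ⋯ r_{r-1} r_r r_{r-1} ⋯ r_k). -/
/-!
Split the block as `p · r_j · r_{j+1} · q`, where `p = r_0 ⋯ r_{j-1}` and `q` is a product of
generators `r_i` with `j + 2 ≤ i ≤ r`. Generators `r_i`, `r_{i'}` with `|i - i'| ≥ 2` commute, since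
all their letters `s_i, s_{N-i}, s_{i'}, s_{N-i'}` are pairwise non-adjacent on the cycle; and
`r_j = s_j s_{N-j}`, `r_{j+1} = s_{j+1} s_{N-j-1}` satisfy the braid relation because they are
built from the two commuting braided pairs `(s_j, s_{j+1})` and `(s_{N-j-1}, s_{N-j})`. Hence
`p r_j r_{j+1} q · r_j = p · r_j r_{j+1} r_j · q = p · r_{j+1} r_j r_{j+1} · q = r_{j+1} · p r_j r_{j+1} q`.
-/

noncomputable section

open CoxeterSystem
open Fin.NatCast

/-- The Coxeter matrix of the affine Weyl group of type `Ã_{2r}`: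
vertices `0, …, 2r` arranged in a cycle mod `N = 2r+1`; `m i j = 3` if
`i - j ≡ ±1 (mod N)`, `m i j = 2` for other off-diagonal pairs. -/
def affACoxeterMatrix (r : ℕ) : CoxeterMatrix (Fin (2 * r + 1)) where
  M i j := if i = j then 1 else if i = j + 1 ∨ j = i + 1 then 3 else 2
  isSymm := by
    apply Matrix.IsSymm.ext
    intro i j
    by_cases h : j = i
    · subst h; rfl
    · rw [if_neg h, if_neg (fun hh : i = j => h hh.symm)]
      exact if_congr or_comm rfl rfl
  diagonal i := if_pos rfl
  off_diagonal i j h := by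
    rw [if_neg h]
    split <;> omega

/-- The affine Weyl group `W` of type `Ã_{2r}`, as the Coxeter group of the above matrix. -/
abbrev AffW (r : ℕ) : Type := (affACoxeterMatrix r).Group

/-- The canonical Coxeter system on `AffW r`. -/
def affCS (r : ℕ) : CoxeterSystem (affACoxeterMatrix r) (AffW r) :=
  (affACoxeterMatrix r).toCoxeterSystem

/-- The simple reflection `s i` (index taken mod `2r+1`). -/
def sgen (r i : ℕ) : AffW r := (affCS r).simple ((i : ℕ) : Fin (2 * r + 1))

/-- The word in the simple reflections representing the generator `r_i` of the
relative Weyl group: `r_0 = s_0`, `r_i = s_i s_{2r+1-i}` for `1 ≤ i ≤ r-1`,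
`r_r = s_r s_{r+1} s_r`. -/
def rword (r : ℕ) : ℕ → List (Fin (2 * r + 1)) := fun i =>
  if i = 0 then [(0 : Fin (2 * r + 1))]
  else if i < r then [((i : ℕ) : Fin (2 * r + 1)), ((2 * r + 1 - i : ℕ) : Fin (2 * r + 1))]
  else [((r : ℕ) : Fin (2 * r + 1)), ((r + 1 : ℕ) : Fin (2 * r + 1)), ((r : ℕ) : Fin (2 * r + 1))]

/-- The element `r_i` of `W`. -/
def rgen (r i : ℕ) : AffW r := (affCS r).wordProd (rword r i)

/-- The list `[a, a+1, …, b]` (empty if `b < a`). -/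
def ascSeq (a b : ℕ) : List ℕ := List.range' a (b + 1 - a)

/-- The list `[b, b-1, …, a]` (empty if `b < a`). -/
def descSeq (a b : ℕ) : List ℕ := (List.range' a (b + 1 - a)).reverse

/-- The expansion, as a word in the simple reflections, of the block
`r_0 r_1 ⋯ r_{r-1} r_r r_{r-1} ⋯ r_k`. -/
def blockWord (r k : ℕ) : List (Fin (2 * r + 1)) :=
  ((ascSeq 0 r ++ descSeq k (r - 1)).map (rword r)).flatten

/-- The element `r_0 r_1 ⋯ r_{r-1} r_r r_{r-1} ⋯ r_k` of `W`. -/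
def blockEl (r k : ℕ) : AffW r := (affCS r).wordProd (blockWord r k)

/-- The expansion, as a word in the simple reflections, of
`ϖ_k = (r_0 r_1 ⋯ r_{r-1} r_r r_{r-1} ⋯ r_k)^k`. -/
def piWord (r k : ℕ) : List (Fin (2 * r + 1)) :=
  (List.replicate k (blockWord r k)).flatten

/-- The element `ϖ_k = (r_0 r_1 ⋯ r_{r-1} r_r r_{r-1} ⋯ r_k)^k` of `W`. -/
def piEl (r k : ℕ) : AffW r := (affCS r).wordProd (piWord r k)

/-- The expansion of the full block `r_0 r_1 ⋯ r_{r-1} r_r` as a word. -/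
def fullBlockWord (r : ℕ) : List (Fin (2 * r + 1)) :=
  ((ascSeq 0 r).map (rword r)).flatten

/-- The element `r_0 r_1 ⋯ r_{r-1} r_r` of `W`. -/
def fullBlockEl (r : ℕ) : AffW r := (affCS r).wordProd (fullBlockWord r)

namespace CoxeterSystem

variable {B W : Type*} [Group W] {M : CoxeterMatrix B} (cs : CoxeterSystem M W)

theorem simple_commute_of_M_eq_two {i i' : B} (h : M i i' = 2) :
    Commute (cs.simple i) (cs.simple i') := by
  have := cs.wordProd_braidWord_eq i i'
  rw [braidWord, braidWord, M.symmetric i' i, h] at this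
  simp only [wordProd, alternatingWord, List.concat_eq_append, List.nil_append, List.cons_append,
    List.map_cons, List.map_nil, List.prod_cons, List.prod_nil, mul_one] at this
  exact this

theorem simple_braid_of_M_eq_three {i i' : B} (h : M i i' = 3) :
    cs.simple i * cs.simple i' * cs.simple i = cs.simple i' * cs.simple i * cs.simple i' := by
  have := cs.wordProd_braidWord_eq i i'
  rw [braidWord, braidWord, M.symmetric i' i, h] at this
  simpa [alternatingWord, wordProd, mul_assoc] using this.symm

theorem wordProd_commute {ω ω' : List B}
    (h : ∀ i ∈ ω, ∀ i' ∈ ω', Commute (cs.simple i) (cs.simple i')) :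
    Commute (cs.wordProd ω) (cs.wordProd ω') :=
  Commute.list_prod_left _ _ fun _ hx => Commute.list_prod_right _ _ fun _ hy => by
    obtain ⟨i, hi, rfl⟩ := List.mem_map.mp hx
    obtain ⟨i', hi', rfl⟩ := List.mem_map.mp hy
    exact h i hi i' hi'

theorem wordProd_flatten (L : List (List B)) : cs.wordProd L.flatten = (L.map cs.wordProd).prod := by
  induction L with
  | nil => simp
  | cons ω L ih => simp [cs.wordProd_append, ih]

end CoxeterSystem

section GroupLemmas

variable {G : Type*} [Group G]

theorem braid_mul_of_braid_of_commute {a b c d : G} (hac : a * c * a = c * a * c)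
    (hbd : b * d * b = d * b * d) (hab : Commute a b) (had : Commute a d) (hcb : Commute c b)
    (hcd : Commute c d) :
    a * b * (c * d) * (a * b) = c * d * (a * b) * (c * d) := by
  calc a * b * (c * d) * (a * b) = a * c * a * (b * d * b) := by
        simp only [mul_assoc, hcb.symm.left_comm, had.symm.left_comm, hab.symm.left_comm]
    _ = c * a * c * (d * b * d) := by rw [hac, hbd]
    _ = c * d * (a * b) * (c * d) := by
        simp only [mul_assoc, had.left_comm, hcd.left_comm, hcb.left_comm]

theorem semiconjBy_of_braid_of_commute {p q x y : G} (hxy : x * y * x = y * x * y)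
    (hp : Commute y p) (hq : Commute x q) :
    SemiconjBy (p * (x * (y * q))) x y :=
  calc p * (x * (y * q)) * x = p * (x * y * x * q) := by simp only [mul_assoc, ← hq.eq]
    _ = p * (y * x * y * q) := by rw [hxy]
    _ = y * (p * (x * (y * q))) := by simp only [← mul_assoc, hp.eq]

end GroupLemmas

section AffineA

variable {r : ℕ}

theorem affACoxeterMatrix_apply_add_one (hr : 0 < r) (x : Fin (2 * r + 1)) :
    (affACoxeterMatrix r).M x (x + 1) = 3 := by
  have hx : x ≠ x + 1 := by
    rw [Ne, Fin.ext_iff, Fin.val_add_one]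
    split_ifs with h
    · simp only [h, Fin.val_last]; omega
    · omega
  simp [affACoxeterMatrix, hx]

theorem affACoxeterMatrix_apply_of_far {x y : Fin (2 * r + 1)}
    (h : x.val + 2 ≤ y.val ∧ y.val + 2 ≤ x.val + (2 * r + 1) ∨
      y.val + 2 ≤ x.val ∧ x.val + 2 ≤ y.val + (2 * r + 1)) :
    (affACoxeterMatrix r).M x y = 2 := by
  have val_of_eq_add_one :
      ∀ u v : Fin (2 * r + 1), u = v + 1 → u.val = v.val + 1 ∨ u.val + 2 * r = v.val := by
    intro u v huv
    rw [Fin.ext_iff, Fin.val_add_one] at huv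
    split_ifs at huv with hv
    · simp only [hv, Fin.val_last]; omega
    · omega
  have hxy : x ≠ y := fun e => by subst e; omega
  have hx : x ≠ y + 1 := fun e => by have := val_of_eq_add_one _ _ e; omega
  have hy : y ≠ x + 1 := fun e => by have := val_of_eq_add_one _ _ e; omega
  simp [affACoxeterMatrix, hxy, hx, hy]

theorem sgen_commute {a b : ℕ} (hb : b ≤ 2 * r) (hab : a + 2 ≤ b) (hba : b + 1 ≤ a + 2 * r) :
    Commute (sgen r a) (sgen r b) := by
  refine (affCS r).simple_commute_of_M_eq_two (affACoxeterMatrix_apply_of_far ?_)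
  rw [Fin.val_cast_of_lt (by omega), Fin.val_cast_of_lt (by omega)]
  omega

theorem sgen_braid (hr : 0 < r) (a : ℕ) :
    sgen r a * sgen r (a + 1) * sgen r a = sgen r (a + 1) * sgen r a * sgen r (a + 1) := by
  simpa [sgen] using (affCS r).simple_braid_of_M_eq_three (affACoxeterMatrix_apply_add_one hr a)

theorem mem_rword {i : ℕ} (hi : i ≤ r) {x : Fin (2 * r + 1)} (hx : x ∈ rword r i) :
    x.val = i ∨ x.val + i = 2 * r + 1 := by
  unfold rword at hx
  split_ifs at hx with h0 hir
  · simp_all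
  all_goals
    simp only [List.mem_cons, List.not_mem_nil, or_false] at hx
    rcases hx with rfl | rfl | rfl <;> rw [Fin.val_cast_of_lt (by omega)] <;> omega

theorem rgen_commute {i j : ℕ} (hij : i + 2 ≤ j) (hj : j ≤ r) : Commute (rgen r i) (rgen r j) :=
  (affCS r).wordProd_commute fun x hx y hy =>
    (affCS r).simple_commute_of_M_eq_two <| affACoxeterMatrix_apply_of_far <| by
      have := mem_rword (by omega) hx
      have := mem_rword hj hy
      omega

theorem rgen_eq_sgen_mul_sgen {i : ℕ} (hi : 0 < i) (hir : i < r) :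
    rgen r i = sgen r i * sgen r (2 * r + 1 - i) := by
  simp [rgen, rword, sgen, hi.ne', hir, (affCS r).wordProd_cons]

theorem rgen_braid {j : ℕ} (hj : 0 < j) (hjr : j + 2 ≤ r) :
    rgen r j * rgen r (j + 1) * rgen r j = rgen r (j + 1) * rgen r j * rgen r (j + 1) := by
  rw [rgen_eq_sgen_mul_sgen hj (by omega), rgen_eq_sgen_mul_sgen (by omega) (by omega),
    show 2 * r + 1 - (j + 1) = 2 * r - j by omega]
  have hbd := sgen_braid (r := r) (by omega) (2 * r - j)
  rw [show 2 * r - j + 1 = 2 * r + 1 - j by omega] at hbd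
  exact braid_mul_of_braid_of_commute (sgen_braid (by omega) j) hbd.symm
    (sgen_commute (by omega) (by omega) (by omega)) (sgen_commute (by omega) (by omega) (by omega))
    (sgen_commute (by omega) (by omega) (by omega)) (sgen_commute (by omega) (by omega) (by omega))

end AffineA

theorem blockEl_eq_prod (r k : ℕ) :
    blockEl r k = ((ascSeq 0 r ++ descSeq k (r - 1)).map (rgen r)).prod := by
  rw [blockEl, blockWord, (affCS r).wordProd_flatten, List.map_map]
  rfl

theorem exists_blockSeq_eq_append_cons_cons {r k j : ℕ} (hjk : j + 2 ≤ k) (hk : k ≤ r) :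
    ∃ P Q : List ℕ, (∀ i ∈ P, i < j) ∧ (∀ i ∈ Q, j + 2 ≤ i ∧ i ≤ r) ∧
      ascSeq 0 r ++ descSeq k (r - 1) = P ++ j :: (j + 1) :: Q := by
  refine ⟨List.range j, List.range' (j + 2) (r - 1 - j) ++ descSeq k (r - 1), ?_, ?_, ?_⟩
  · simp
  · simp only [List.mem_append, descSeq, List.mem_reverse, List.mem_range'_1]
    omega
  · rw [ascSeq, show r + 1 - 0 = j + (r - 1 - j + 2) by omega, ← List.range'_append,
      List.range_eq_range', List.range'_succ, List.range'_succ]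
    simp

theorem statement3_general (r k j : ℕ) (hk2 : k ≤ r)
    (hj1 : 1 ≤ j) (hj2 : j ≤ k - 2) :
    blockEl r k * rgen r j = rgen r (j + 1) * blockEl r k := by
  obtain ⟨P, Q, hP, hQ, hsplit⟩ := exists_blockSeq_eq_append_cons_cons (j := j) (by omega) hk2
  have hPcomm : Commute (rgen r (j + 1)) (P.map (rgen r)).prod := by
    refine Commute.list_prod_right _ _ (List.forall_mem_map.2 fun i hi => ?_)
    have := hP i hi
    exact (rgen_commute (by omega) (by omega)).symm
  have hQcomm : Commute (rgen r j) (Q.map (rgen r)).prod :=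
    Commute.list_prod_right _ _ <| List.forall_mem_map.2 fun i hi =>
      rgen_commute (hQ i hi).1 (hQ i hi).2
  rw [blockEl_eq_prod, hsplit]
  simp only [List.map_append, List.prod_append, List.map_cons, List.prod_cons]
  exact semiconjBy_of_braid_of_commute (rgen_braid hj1 (by omega)) hPcomm hQcomm

/-- For `r ≥ 3`, `3 ≤ k ≤ r` and `1 ≤ j ≤ k-2`, one has
`(r_0 r_1 ⋯ r_{r-1} r_r r_{r-1} ⋯ r_k) · r_j = r_{j+1} · (r_0 r_1 ⋯ r_{r-1} r_r r_{r-1} ⋯ r_k)`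
in `W`. -/
theorem statement3 (r k j : ℕ) (hr : 3 ≤ r) (hk1 : 3 ≤ k) (hk2 : k ≤ r)
    (hj1 : 1 ≤ j) (hj2 : j ≤ k - 2) :
    blockEl r k * rgen r j = rgen r (j + 1) * blockEl r k :=
  statement3_general r k j hk2 hj1 hj2
end
end

section
/- For all k₁, k₂, l ∈ ℤ the following identity holds: 𝕊(k₁, k₂+1 | l) + 𝕊(k₁+1, k₂ | l) − (v + v^{-1}) · 𝕊(k₁, k₂ | l+1) = 0. -/
noncomputable section

/-- The variable `v`, a transcendental generator of the field `F = ℚ(v)` of rational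
functions over `ℚ`. -/
def vv : RatFunc ℚ := RatFunc.X

/-- The `q`-deformed commutator `[x, y]_q = x·y − q·(y·x)`. -/
def qcomm {A : Type*} [Ring A] [Algebra (RatFunc ℚ) A] (q : RatFunc ℚ) (x y : A) : A :=
  x * y - q • (y * x)

/-- The symmetrized Serre-type expression
`𝕊(k₁, k₂ | l) = Sym_{k₁,k₂} (x_{k₁} x_{k₂} y_l − [2] x_{k₁} y_l x_{k₂} + y_l x_{k₁} x_{k₂})`,
where `[2] = v + v⁻¹`. -/
def Ssym {A : Type*} [Ring A] [Algebra (RatFunc ℚ) A] (x y : ℤ → A) (k₁ k₂ l : ℤ) : A :=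
  (x k₁ * x k₂ * y l - (vv + vv⁻¹) • (x k₁ * y l * x k₂) + y l * x k₁ * x k₂) +
    (x k₂ * x k₁ * y l - (vv + vv⁻¹) • (x k₂ * y l * x k₁) + y l * x k₂ * x k₁)

/-!
Write `a_i = x_{k₁+i}`, `b_i = x_{k₂+i}`, `c_i = y_{l+i}`, and let `R₁` be the left-hand side of
relation (i) for `(k₁, k₂)` and `R₂`, `R₃` those of relation (ii) for `(k₁, l)` and `(k₂, l)`.
Expanding both sides gives the identity
`𝕊(k₁, k₂+1 | l) + 𝕊(k₁+1, k₂ | l) − [2] 𝕊(k₁, k₂ | l+1)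
  = c₀R₁ − v² R₁c₀ − [2] (b₀R₂ + a₀R₃) + (1 + v⁻²) (R₂b₀ + R₃a₀)`
of noncommutative polynomials, whose right-hand side vanishes under the relations.
-/

section SerreSymmetrization

variable {K A : Type*} [Field K] [Ring A] [Algebra K A]

def serreSym (t : K) (a b c : A) : A :=
  (a * b * c - t • (a * c * b) + c * a * b) + (b * a * c - t • (b * c * a) + c * b * a)

def loopRelXX (v : K) (a₀ a₁ b₀ b₁ : A) : A :=
  (a₀ * b₁ - (v⁻¹ ^ 2) • (b₁ * a₀)) - (v⁻¹ ^ 2) • (a₁ * b₀ - (v ^ 2) • (b₀ * a₁))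

def loopRelXY (v : K) (a₀ a₁ c₀ c₁ : A) : A :=
  (a₀ * c₁ - v • (c₁ * a₀)) - v • (a₁ * c₀ - v⁻¹ • (c₀ * a₁))

theorem serreSym_shift_eq {v : K} (hv : v ≠ 0) (a₀ a₁ b₀ b₁ c₀ c₁ : A) :
    serreSym (v + v⁻¹) a₀ b₁ c₀ + serreSym (v + v⁻¹) a₁ b₀ c₀ -
        (v + v⁻¹) • serreSym (v + v⁻¹) a₀ b₀ c₁ =
      c₀ * loopRelXX v a₀ a₁ b₀ b₁ - v ^ 2 • (loopRelXX v a₀ a₁ b₀ b₁ * c₀) -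
        (v + v⁻¹) • (b₀ * loopRelXY v a₀ a₁ c₀ c₁ + a₀ * loopRelXY v b₀ b₁ c₀ c₁) +
        (1 + v⁻¹ ^ 2) • (loopRelXY v a₀ a₁ c₀ c₁ * b₀ + loopRelXY v b₀ b₁ c₀ c₁ * a₀) := by
  simp only [serreSym, loopRelXX, loopRelXY, mul_sub, sub_mul, mul_add, add_mul, smul_sub,
    smul_add, mul_smul_comm, smul_mul_assoc, smul_smul, mul_assoc]
  match_scalars <;> field_simp <;> ring

theorem serreSym_shift_eq_zero {v : K} (hv : v ≠ 0) {a₀ a₁ b₀ b₁ c₀ c₁ : A}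
    (hab : loopRelXX v a₀ a₁ b₀ b₁ = 0) (hac : loopRelXY v a₀ a₁ c₀ c₁ = 0)
    (hbc : loopRelXY v b₀ b₁ c₀ c₁ = 0) :
    serreSym (v + v⁻¹) a₀ b₁ c₀ + serreSym (v + v⁻¹) a₁ b₀ c₀ -
      (v + v⁻¹) • serreSym (v + v⁻¹) a₀ b₀ c₁ = 0 := by
  simp [serreSym_shift_eq hv, hab, hac, hbc]

end SerreSymmetrization

theorem statement16_general {A : Type*} [Ring A] [Algebra (RatFunc ℚ) A] (x y : ℤ → A)
    (hxx : ∀ k l : ℤ,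
      qcomm (vv⁻¹ ^ 2) (x k) (x (l + 1)) - (vv⁻¹ ^ 2) • qcomm (vv ^ 2) (x (k + 1)) (x l) = 0)
    (hxy : ∀ k l : ℤ,
      qcomm vv (x k) (y (l + 1)) - vv • qcomm vv⁻¹ (x (k + 1)) (y l) = 0)
    (k₁ k₂ l : ℤ) :
    Ssym x y k₁ (k₂ + 1) l + Ssym x y (k₁ + 1) k₂ l -
      (vv + vv⁻¹) • Ssym x y k₁ k₂ (l + 1) = 0 :=
  serreSym_shift_eq_zero RatFunc.X_ne_zero (hxx k₁ k₂) (hxy k₁ l) (hxy k₂ l)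

/-- `𝕊(k₁, k₂+1 | l) + 𝕊(k₁+1, k₂ | l) − (v+v⁻¹)·𝕊(k₁, k₂ | l+1) = 0`. -/
theorem statement16 {A : Type*} [Ring A] [Algebra (RatFunc ℚ) A] (x y : ℤ → A)
    (hxx : ∀ k l : ℤ,
      qcomm (vv⁻¹ ^ 2) (x k) (x (l + 1)) - (vv⁻¹ ^ 2) • qcomm (vv ^ 2) (x (k + 1)) (x l) = 0)
    (hxy : ∀ k l : ℤ,
      qcomm vv (x k) (y (l + 1)) - vv • qcomm vv⁻¹ (x (k + 1)) (y l) = 0)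
    (hyx : ∀ k l : ℤ,
      qcomm vv (y k) (x (l + 1)) - vv • qcomm vv⁻¹ (y (k + 1)) (x l) = 0)
    (k₁ k₂ l : ℤ) :
    Ssym x y k₁ (k₂ + 1) l + Ssym x y (k₁ + 1) k₂ l -
      (vv + vv⁻¹) • Ssym x y k₁ k₂ (l + 1) = 0 :=
  statement16_general x y hxx hxy k₁ k₂ l
end
end
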